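/- Suppose f : L_1 × ⋯ × L_n → L is an order-preserving pseudo-Sugeno integral that depends on all of its variables and satisfies f(0,…,0) = 0 and f(1,…,1) = 1, where L is a complete bounded chain. Then: (a) for each k and each a ∈ L_k, any two tuples x, x′ with x_k = x′_k = a lying in W_a satisfy f(x) = f(x′), so φ_k^f is well defined; (b) each φ_k^f : L_k → L is order-preserving; (c) q^f is a Sugeno integral; and (d) f(x) = q^f(φ_1^f(x_1),…,φ_n^f(x_n)) for every x ∈ L_1 × ⋯ × L_n. -/
import Mathlib


open Function

/-- A lattice polynomial function on a chain `M`: a member of the smallest set of `n`-ary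
functions containing all projections and constants and closed under pointwise `⊓` and `⊔`. -/
inductive IsLatticePolynomial {M : Type*} [LinearOrder M] {n : ℕ} :
    ((Fin n → M) → M) → Prop
  | proj (i : Fin n) : IsLatticePolynomial fun x => x i
  | const (c : M) : IsLatticePolynomial fun _ => c
  | inf {p q : (Fin n → M) → M} :
      IsLatticePolynomial p → IsLatticePolynomial q →
      IsLatticePolynomial fun x => p x ⊓ q x
  | sup {p q : (Fin n → M) → M} :
      IsLatticePolynomial p → IsLatticePolynomial q →
      IsLatticePolynomial fun x => p x ⊔ q x

/-- A Sugeno integral: an idempotent lattice polynomial function. -/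
def IsSugenoIntegral {M : Type*} [LinearOrder M] {n : ℕ} (q : (Fin n → M) → M) : Prop :=
  IsLatticePolynomial q ∧ ∀ c : M, q (fun _ => c) = c

/-- `φ` satisfies the boundary conditions: `φ 0 ≤ φ x ≤ φ 1` for all `x`. -/
def BoundaryCond {α : Type*} {M : Type*} [LE α] [OrderTop α] [OrderBot α] [Preorder M]
    (φ : α → M) : Prop :=
  ∀ x : α, φ ⊥ ≤ φ x ∧ φ x ≤ φ ⊤

/-- The median of three elements of a lattice. -/
def med {α : Type*} [Lattice α] (a b c : α) : α :=
  (a ⊓ b) ⊔ (a ⊓ c) ⊔ (b ⊓ c)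

/-- Two `n`-tuples are comonotonic if some permutation sorts both simultaneously. -/
def Comonotone {M : Type*} [Preorder M] {n : ℕ} (y y' : Fin n → M) : Prop :=
  ∃ σ : Equiv.Perm (Fin n), Monotone (y ∘ σ) ∧ Monotone (y' ∘ σ)

section PiDefs

variable {n : ℕ} {M : Type*} {L : Fin n → Type*}
variable [∀ i, LinearOrder (L i)] [∀ i, BoundedOrder (L i)]
variable [LinearOrder M] [BoundedOrder M]

/-- A pseudo-polynomial function: composition of a lattice polynomial function with unary
maps satisfying the boundary conditions. -/
def IsPseudoPolynomial (f : (∀ i, L i) → M) : Prop :=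
  ∃ (p : (Fin n → M) → M) (φ : ∀ i, L i → M),
    IsLatticePolynomial p ∧ (∀ i, BoundaryCond (φ i)) ∧
      ∀ x, f x = p fun i => φ i (x i)

/-- A pseudo-Sugeno integral: composition of a Sugeno integral with unary maps satisfying
the boundary conditions. -/
def IsPseudoSugenoIntegral (f : (∀ i, L i) → M) : Prop :=
  ∃ (q : (Fin n → M) → M) (φ : ∀ i, L i → M),
    IsSugenoIntegral q ∧ (∀ i, BoundaryCond (φ i)) ∧
      ∀ x, f x = q fun i => φ i (x i)

/-- A Sugeno utility function: composition of a Sugeno integral with local utility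
(order-preserving) functions. -/
def IsSugenoUtility (f : (∀ i, L i) → M) : Prop :=
  ∃ (q : (Fin n → M) → M) (φ : ∀ i, L i → M),
    IsSugenoIntegral q ∧ (∀ i, Monotone (φ i)) ∧
      ∀ x, f x = q fun i => φ i (x i)

/-- `f` is pseudo-median decomposable w.r.t. the unary maps `φ`. -/
def PseudoMedianDecomp (f : (∀ i, L i) → M) (φ : ∀ i, L i → M) : Prop :=
  ∀ (x : ∀ i, L i) (k : Fin n),
    f x = med (f (update x k ⊥)) (φ k (x k)) (f (update x k ⊤))

/-- `d ∈ φ̄⁻¹(c)`: all components of `d` are mapped to `c` by the corresponding `φ i`. -/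
def FiberAll (φ : ∀ i, L i → M) (c : M) (d : ∀ i, L i) : Prop :=
  ∀ i, φ i (d i) = c

/-- `f` is pseudo-min homogeneous w.r.t. `φ` with common range `R`. -/
def PseudoMinHomog (f : (∀ i, L i) → M) (φ : ∀ i, L i → M) (R : Set M) : Prop :=
  ∀ (x : ∀ i, L i), ∀ c ∈ R, ∀ d : ∀ i, L i, FiberAll φ c d →
    f (fun i => x i ⊓ d i) = f x ⊓ c

/-- `f` is pseudo-max homogeneous w.r.t. `φ` with common range `R`. -/
def PseudoMaxHomog (f : (∀ i, L i) → M) (φ : ∀ i, L i → M) (R : Set M) : Prop :=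
  ∀ (x : ∀ i, L i), ∀ c ∈ R, ∀ d : ∀ i, L i, FiberAll φ c d →
    f (fun i => x i ⊔ d i) = f x ⊔ c

/-- Condition (PI): `f d = c` whenever `d ∈ φ̄⁻¹(c)`, `c ∈ R`. -/
def PseudoPI (f : (∀ i, L i) → M) (φ : ∀ i, L i → M) (R : Set M) : Prop :=
  ∀ c ∈ R, ∀ d : ∀ i, L i, FiberAll φ c d → f d = c

/-- `[x]_d`: the tuple whose `i`th component is `0` if `x i ≤ d i`, and `x i` otherwise. -/
def cutBelow (x d : ∀ i, L i) : ∀ i, L i := fun i => if x i ≤ d i then ⊥ else x i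

/-- `[x]^d`: the tuple whose `i`th component is `1` if `x i ≥ d i`, and `x i` otherwise. -/
def cutAbove (x d : ∀ i, L i) : ∀ i, L i := fun i => if d i ≤ x i then ⊤ else x i

/-- `f` is pseudo-horizontally maxitive w.r.t. `φ` with common range `R`. -/
def PseudoHorizMax (f : (∀ i, L i) → M) (φ : ∀ i, L i → M) (R : Set M) : Prop :=
  ∀ (x : ∀ i, L i), ∀ c ∈ R, ∀ d : ∀ i, L i, FiberAll φ c d →
    f x = f (fun i => x i ⊓ d i) ⊔ f (cutBelow x d)

/-- `f` is pseudo-horizontally minitive w.r.t. `φ` with common range `R`. -/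
def PseudoHorizMin (f : (∀ i, L i) → M) (φ : ∀ i, L i → M) (R : Set M) : Prop :=
  ∀ (x : ∀ i, L i), ∀ c ∈ R, ∀ d : ∀ i, L i, FiberAll φ c d →
    f x = f (fun i => x i ⊔ d i) ⊓ f (cutAbove x d)

/-- `f` is pseudo-comonotonic minitive w.r.t. `φ`. -/
def PseudoComonMin (f : (∀ i, L i) → M) (φ : ∀ i, L i → M) : Prop :=
  ∀ x x' : ∀ i, L i,
    Comonotone (fun i => φ i (x i)) (fun i => φ i (x' i)) →
      f (fun i => x i ⊓ x' i) = f x ⊓ f x'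

/-- `f` is pseudo-comonotonic maxitive w.r.t. `φ`. -/
def PseudoComonMax (f : (∀ i, L i) → M) (φ : ∀ i, L i → M) : Prop :=
  ∀ x x' : ∀ i, L i,
    Comonotone (fun i => φ i (x i)) (fun i => φ i (x' i)) →
      f (fun i => x i ⊔ x' i) = f x ⊔ f x'

/-- The disjunctive normal form polynomial determined by the values of `f` on the
characteristic vectors `e_I`: `y ↦ ⋁_{I ⊆ [n]} (f(e_I) ∧ ⋀_{i ∈ I} y i)`. -/
def qDNF (f : (∀ i, L i) → M) : (Fin n → M) → M :=
  fun y => Finset.univ.sup fun I : Finset (Fin n) =>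
    f (fun i => if i ∈ I then ⊤ else ⊥) ⊓ I.inf y

end PiDefs

section ChainDefs

variable {n : ℕ} {M : Type*} [LinearOrder M] [BoundedOrder M]

/-- The DNF polynomial `y ↦ ⋁_{I ⊆ [n]} (p(e_I) ∧ ⋀_{i ∈ I} y i)` for `p : M^n → M`. -/
def polyDNF (p : (Fin n → M) → M) : (Fin n → M) → M :=
  fun y => Finset.univ.sup fun I : Finset (Fin n) =>
    p (fun i => if i ∈ I then ⊤ else ⊥) ⊓ I.inf y

/-- The convex hull of the range of `p` (in a chain). -/
def clRan (p : (Fin n → M) → M) : Set M :=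
  {c : M | ∃ a ∈ Set.range p, ∃ b ∈ Set.range p, a ≤ c ∧ c ≤ b}

/-- Median decomposability of `p : M^n → M`. -/
def MedianDecomp (p : (Fin n → M) → M) : Prop :=
  ∀ (x : Fin n → M) (k : Fin n),
    p x = med (p (update x k ⊥)) (x k) (p (update x k ⊤))

/-- `S`-min homogeneity: `p(x ∧ c) = p(x) ∧ c` for all `c ∈ S`. -/
def MinHomogOn (p : (Fin n → M) → M) (S : Set M) : Prop :=
  ∀ (x : Fin n → M), ∀ c ∈ S, p (fun i => x i ⊓ c) = p x ⊓ c

/-- `S`-max homogeneity: `p(x ∨ c) = p(x) ∨ c` for all `c ∈ S`. -/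
def MaxHomogOn (p : (Fin n → M) → M) (S : Set M) : Prop :=
  ∀ (x : Fin n → M), ∀ c ∈ S, p (fun i => x i ⊔ c) = p x ⊔ c

/-- Range-idempotence: `p(c,…,c) = c` for every `c` in the convex hull of the range. -/
def RangeIdempotent (p : (Fin n → M) → M) : Prop :=
  ∀ c ∈ clRan p, p (fun _ => c) = c

/-- Horizontal minitivity: `p(x) = p(x ∨ c) ∧ p([x]^c)`. -/
def HorizMin (p : (Fin n → M) → M) : Prop :=
  ∀ (x : Fin n → M) (c : M),
    p x = p (fun i => x i ⊔ c) ⊓ p (fun i => if c ≤ x i then ⊤ else x i)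

/-- Horizontal maxitivity: `p(x) = p(x ∧ c) ∨ p([x]_c)`. -/
def HorizMax (p : (Fin n → M) → M) : Prop :=
  ∀ (x : Fin n → M) (c : M),
    p x = p (fun i => x i ⊓ c) ⊔ p (fun i => if x i ≤ c then ⊥ else x i)

end ChainDefs

section Aux
variable {n : ℕ} {M : Type*} [LinearOrder M]

lemma latticePoly_monotone {p : (Fin n → M) → M} (hp : IsLatticePolynomial p) :
    Monotone p := by
  induction hp with
  | proj i => exact fun x y h => h i
  | const c => exact monotone_const
  | inf hp hq ihp ihq => exact fun x y h => inf_le_inf (ihp h) (ihq h)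
  | sup hp hq ihp ihq => exact fun x y h => sup_le_sup (ihp h) (ihq h)

lemma clamp_eq {A B c : M} (h : A ≤ B) : A ⊔ c ⊓ B = (A ⊔ c) ⊓ B := by
  rw [inf_sup_right, inf_eq_left.mpr h]

lemma key_alg {A B b0 b1 c : M} (h0 : b0 ≤ c) (h1 : c ≤ b1) :
    (A ⊔ b0 ⊓ B) ⊔ c ⊓ (A ⊔ b1 ⊓ B) = A ⊔ c ⊓ B := by
  rw [inf_sup_left, ← inf_assoc, inf_eq_left.mpr h1]
  apply le_antisymm
  · exact sup_le (sup_le le_sup_left ((inf_le_inf_right _ h0).trans le_sup_right))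
      (sup_le (inf_le_right.trans le_sup_left) le_sup_right)
  · exact sup_le (le_sup_left.trans le_sup_left) (le_sup_right.trans le_sup_right)

lemma w_val {A B c v : M} (h : v = A ⊔ c ⊓ B) (h1 : A < v) (h2 : v < B) : v = c := by
  rcases le_total (c ⊓ B) A with hc | hc
  · rw [sup_eq_left.mpr hc] at h; exact absurd h h1.ne'
  · rw [sup_eq_right.mpr hc] at h
    rcases le_total c B with hcB | hcB
    · rw [inf_eq_left.mpr hcB] at h; exact h
    · rw [inf_eq_right.mpr hcB] at h; exact absurd h h2.ne

lemma l_val {A B c v : M} (h : v = A ⊔ c ⊓ B) (h1 : A < v) (h2 : v = B) : B ≤ c := by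
  rcases le_total (c ⊓ B) A with hc | hc
  · rw [sup_eq_left.mpr hc] at h; exact absurd h h1.ne'
  · rw [sup_eq_right.mpr hc] at h
    rcases le_total c B with hcB | hcB
    · rw [inf_eq_left.mpr hcB] at h; rw [h2] at h; exact le_of_eq h
    · exact hcB

lemma u_val {A B c v : M} (h : v = A ⊔ c ⊓ B) (h1 : v = A) (h2 : v < B) : c ≤ A := by
  have hc : c ⊓ B ≤ A := by
    rw [h1] at h; exact sup_eq_left.mp h.symm
  rcases le_total c B with hcB | hcB
  · rwa [inf_eq_left.mpr hcB] at hc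
  · rw [inf_eq_right.mpr hcB] at hc
    rw [h1] at h2; exact absurd h2 (not_lt.mpr hc)

lemma latticePoly_update [BoundedOrder M] {p : (Fin n → M) → M} (hp : IsLatticePolynomial p) :
    ∀ (y : Fin n → M) (k : Fin n) (c : M),
      p (Function.update y k c) = p (Function.update y k ⊥) ⊔ c ⊓ p (Function.update y k ⊤) := by
  induction hp with
  | proj i =>
    intro y k c
    by_cases h : i = k
    · subst h; simp
    · simp [Function.update_of_ne h]
  | const c' => intro y k c; simp
  | inf hp hq ihp ihq =>
    intro y k c
    have hup : Function.update y k (⊥ : M) ≤ Function.update y k ⊤ := by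
      intro i; by_cases h : i = k
      · subst h; simp
      · simp [Function.update_of_ne h]
    have h1 := (latticePoly_monotone hp) hup
    have h2 := (latticePoly_monotone hq) hup
    dsimp only
    rw [ihp y k c, ihq y k c]
    rw [clamp_eq h1, clamp_eq h2, inf_inf_inf_comm, ← sup_inf_right, clamp_eq (inf_le_inf h1 h2)]
  | sup hp hq ihp ihq =>
    intro y k c
    dsimp only
    rw [ihp y k c, ihq y k c, inf_sup_left]
    ac_rfl

end Aux
section FinAux
variable {n : ℕ} {M : Type*} [LinearOrder M] [BoundedOrder M]

lemma poly_finset_inf (I : Finset (Fin n)) :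
    IsLatticePolynomial (fun y : Fin n → M => I.inf y) := by
  classical
  induction I using Finset.induction_on with
  | empty => simpa using IsLatticePolynomial.const (⊤ : M)
  | @insert a s ha ih =>
    simpa only [Finset.inf_insert] using IsLatticePolynomial.inf (.proj a) ih

lemma poly_finset_sup {ι : Type*} (s : Finset ι) (g : ι → (Fin n → M) → M)
    (hg : ∀ i, IsLatticePolynomial (g i)) :
    IsLatticePolynomial (fun y => s.sup (fun i => g i y)) := by
  classical
  induction s using Finset.induction_on with
  | empty => simpa using IsLatticePolynomial.const (⊥ : M)
  | @insert a s ha ih =>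
    simpa only [Finset.sup_insert] using IsLatticePolynomial.sup (hg a) ih

end FinAux

/-- correctness of algorithm SUFF: if `f` is an order-preserving
pseudo-Sugeno integral depending on all of its variables, with `f(0,…,0) = 0` and
`f(1,…,1) = 1`, and `L` is a complete bounded chain, then:
(a) the value of `f` on tuples of `W_a` (with `k`th component `a`) is uniquely determined;
and there are functions `φ k : L k → M` defined by the rules (W), (L)/(LU), (U) of the
algorithm such that (b) each `φ k` is order-preserving, (c) `q^f` is a Sugeno integral,
and (d) `f(x) = q^f(φ₁(x₁),…,φₙ(xₙ))`. -/
theorem suff_algorithm_correct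
    {n : ℕ} {M : Type*} {L : Fin n → Type*}
    [∀ i, LinearOrder (L i)] [∀ i, BoundedOrder (L i)]
    [CompleteLinearOrder M]
    (f : (∀ i, L i) → M) (hf : Monotone f) (hpsi : IsPseudoSugenoIntegral f)
    (hdep : ∀ k : Fin n, ∃ (x : ∀ i, L i) (c : L k),
      f (Function.update x k c) ≠ f x)
    (h0 : f (fun _ => ⊥) = ⊥) (h1 : f (fun _ => ⊤) = ⊤) :
    -- (a) well-definedness of the value seen through windows
    (∀ (k : Fin n) (x x' : ∀ i, L i), x k = x' k →
      f (Function.update x k ⊥) < f x → f x < f (Function.update x k ⊤) →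
      f (Function.update x' k ⊥) < f x' → f x' < f (Function.update x' k ⊤) →
      f x = f x') ∧
    ∃ φ : ∀ k, L k → M,
      -- the functions φ k are given by the rules (W), (L)/(LU), (U)
      (∀ (k : Fin n) (a : L k),
        -- rule (W)
        (∀ x : ∀ i, L i, x k = a →
          f (Function.update x k ⊥) < f x → f x < f (Function.update x k ⊤) →
          φ k a = f x) ∧
        -- rules (L) and (LU)
        ((¬ ∃ x : ∀ i, L i, x k = a ∧
            f (Function.update x k ⊥) < f x ∧ f x < f (Function.update x k ⊤)) →
          (∃ x : ∀ i, L i, x k = a ∧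
            f (Function.update x k ⊥) < f x ∧ f x = f (Function.update x k ⊤)) →
          φ k a = sSup {m : M | ∃ x : ∀ i, L i, x k = a ∧
            f (Function.update x k ⊥) < f x ∧ f x = f (Function.update x k ⊤) ∧
            f x = m}) ∧
        -- rule (U)
        ((¬ ∃ x : ∀ i, L i, x k = a ∧
            f (Function.update x k ⊥) < f x ∧ f x < f (Function.update x k ⊤)) →
          (¬ ∃ x : ∀ i, L i, x k = a ∧
            f (Function.update x k ⊥) < f x ∧ f x = f (Function.update x k ⊤)) →
          φ k a = sInf {m : M | ∃ x : ∀ i, L i, x k = a ∧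
            f (Function.update x k ⊥) = f x ∧ f x < f (Function.update x k ⊤) ∧
            f x = m})) ∧
      -- (b) each φ k is a local utility function
      (∀ k, Monotone (φ k)) ∧
      -- (c) q^f is a Sugeno integral
      IsSugenoIntegral (qDNF f) ∧
      -- (d) the factorization
      (∀ x, f x = qDNF f fun i => φ i (x i)) := by
  classical
  obtain ⟨q, ψ, ⟨hqpoly, hqid⟩, hbd, hrep⟩ := hpsi
  have hupmem : ∀ (x : ∀ i, L i) (k : Fin n) (a b : L k), a ≤ b →
      Function.update x k a ≤ Function.update x k b := by
    intro x k a b hab i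
    by_cases h : i = k
    · subst h; simpa using hab
    · simp [Function.update_of_ne h]
  have hK : ∀ (x : ∀ i, L i) (k : Fin n),
      f x = f (update x k ⊥) ⊔ ψ k (x k) ⊓ f (update x k ⊤) := by
    intro x k
    set y : Fin n → M := fun i => ψ i (x i) with hy
    have hxy : ∀ b : L k,
        (fun i => ψ i (Function.update x k b i)) = Function.update y k (ψ k b) := by
      intro b; funext i
      by_cases h : i = k
      · subst h; simp [hy]
      · simp [Function.update_of_ne h, hy]
    have h1' : f x = q (Function.update y k (ψ k (x k))) := by
      have h2 := hxy (x k)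
      rw [Function.update_eq_self] at h2
      rw [hrep x, h2]
    have hb := hbd k (x k)
    rw [h1', latticePoly_update hqpoly y k (ψ k (x k)),
        hrep (Function.update x k ⊥), hrep (Function.update x k ⊤), hxy ⊥, hxy ⊤,
        latticePoly_update hqpoly y k (ψ k ⊥), latticePoly_update hqpoly y k (ψ k ⊤)]
    exact (key_alg (hb.1) (hb.2)).symm
  have hlow : ∀ (x : ∀ i, L i) (k : Fin n), f (update x k ⊥) ≤ f x := by
    intro x k
    conv_rhs => rw [← Function.update_eq_self k x]
    exact hf (hupmem x k ⊥ (x k) bot_le)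
  have hhigh : ∀ (x : ∀ i, L i) (k : Fin n), f x ≤ f (update x k ⊤) := by
    intro x k
    conv_lhs => rw [← Function.update_eq_self k x]
    exact hf (hupmem x k (x k) ⊤ le_top)
  have ha : ∀ (k : Fin n) (x x' : ∀ i, L i), x k = x' k →
      f (Function.update x k ⊥) < f x → f x < f (Function.update x k ⊤) →
      f (Function.update x' k ⊥) < f x' → f x' < f (Function.update x' k ⊤) →
      f x = f x' := by
    intro k x x' hxx' h1 h2 h3 h4
    rw [w_val (hK x k) h1 h2, w_val (hK x' k) h3 h4, hxx']
  refine ⟨ha, ?_⟩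
  set φ : ∀ k, L k → M := fun k a =>
    if h : ∃ x : ∀ i, L i, x k = a ∧
        f (Function.update x k ⊥) < f x ∧ f x < f (Function.update x k ⊤) then
      f h.choose
    else if ∃ x : ∀ i, L i, x k = a ∧
        f (Function.update x k ⊥) < f x ∧ f x = f (Function.update x k ⊤) then
      sSup {m : M | ∃ x : ∀ i, L i, x k = a ∧
        f (Function.update x k ⊥) < f x ∧ f x = f (Function.update x k ⊤) ∧ f x = m}
    else
      sInf {m : M | ∃ x : ∀ i, L i, x k = a ∧
        f (Function.update x k ⊥) = f x ∧ f x < f (Function.update x k ⊤) ∧ f x = m}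
    with hφdef
  have hφW : ∀ (k : Fin n) (a : L k) (x : ∀ i, L i), x k = a →
      f (update x k ⊥) < f x → f x < f (update x k ⊤) → φ k a = f x := by
    intro k a x hx h1 h2
    have hex : ∃ z : ∀ i, L i, z k = a ∧
        f (Function.update z k ⊥) < f z ∧ f z < f (Function.update z k ⊤) :=
      ⟨x, hx, h1, h2⟩
    simp only [hφdef]
    rw [dif_pos hex]
    obtain ⟨hz1, hz2, hz3⟩ := hex.choose_spec
    exact ha k _ x (hz1.trans hx.symm) hz2 hz3 h1 h2
  have hφL : ∀ (k : Fin n) (a : L k),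
      (¬ ∃ x : ∀ i, L i, x k = a ∧
          f (Function.update x k ⊥) < f x ∧ f x < f (Function.update x k ⊤)) →
      (∃ x : ∀ i, L i, x k = a ∧
          f (Function.update x k ⊥) < f x ∧ f x = f (Function.update x k ⊤)) →
      φ k a = sSup {m : M | ∃ x : ∀ i, L i, x k = a ∧
          f (Function.update x k ⊥) < f x ∧ f x = f (Function.update x k ⊤) ∧
          f x = m} := by
    intro k a hn he
    simp only [hφdef]
    rw [dif_neg hn, if_pos he]
  have hφU : ∀ (k : Fin n) (a : L k),
      (¬ ∃ x : ∀ i, L i, x k = a ∧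
          f (Function.update x k ⊥) < f x ∧ f x < f (Function.update x k ⊤)) →
      (¬ ∃ x : ∀ i, L i, x k = a ∧
          f (Function.update x k ⊥) < f x ∧ f x = f (Function.update x k ⊤)) →
      φ k a = sInf {m : M | ∃ x : ∀ i, L i, x k = a ∧
          f (Function.update x k ⊥) = f x ∧ f x < f (Function.update x k ⊤) ∧
          f x = m} := by
    intro k a hn hn'
    simp only [hφdef]
    rw [dif_neg hn, if_neg hn']
  have hφWpsi : ∀ (k : Fin n) (a : L k) (x : ∀ i, L i), x k = a →
      f (update x k ⊥) < f x → f x < f (update x k ⊤) → φ k a = ψ k a := by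
    intro k a x hx h1 h2
    rw [hφW k a x hx h1 h2, w_val (hK x k) h1 h2, hx]
  -- the key pseudo-median decomposition w.r.t. φ
  have hstar : ∀ (z : ∀ i, L i) (k : Fin n),
      f z = f (update z k ⊥) ⊔ φ k (z k) ⊓ f (update z k ⊤) := by
    intro z k
    rcases lt_or_eq_of_le (hlow z k) with h1 | h1
    · rcases lt_or_eq_of_le (hhigh z k) with h2 | h2
      · -- W case
        rw [hφW k (z k) z rfl h1 h2, inf_eq_left.mpr h2.le, sup_eq_right.mpr h1.le]
      · -- L case
        have hge : f z ≤ φ k (z k) := by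
          by_cases hW : ∃ x : ∀ i, L i, x k = z k ∧
              f (Function.update x k ⊥) < f x ∧ f x < f (Function.update x k ⊤)
          · obtain ⟨x, hx, hx1, hx2⟩ := hW
            rw [hφWpsi k (z k) x hx hx1 hx2]
            exact h2.le.trans (l_val (hK z k) h1 h2)
          · rw [hφL k (z k) hW ⟨z, rfl, h1, h2⟩]
            exact le_sSup ⟨z, rfl, h1, h2, rfl⟩
        have h3 : φ k (z k) ⊓ f (update z k ⊤) = f (update z k ⊤) :=
          inf_eq_right.mpr (h2 ▸ hge)
        rw [h3, sup_eq_right.mpr (h1.le.trans (hhigh z k)), ← h2]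
    · -- f (update z k ⊥) = f z
      rcases lt_or_eq_of_le (hhigh z k) with h2 | h2
      · -- U case
        have hle : φ k (z k) ≤ f z := by
          by_cases hW : ∃ x : ∀ i, L i, x k = z k ∧
              f (Function.update x k ⊥) < f x ∧ f x < f (Function.update x k ⊤)
          · obtain ⟨x, hx, hx1, hx2⟩ := hW
            rw [hφWpsi k (z k) x hx hx1 hx2]
            exact (u_val (hK z k) h1.symm h2).trans h1.le
          · by_cases hL : ∃ x : ∀ i, L i, x k = z k ∧
                f (Function.update x k ⊥) < f x ∧ f x = f (Function.update x k ⊤)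
            · rw [hφL k (z k) hW hL]
              apply sSup_le
              rintro m ⟨w, hw, hw1, hw2, rfl⟩
              have e1 : f w ≤ ψ k (w k) := hw2.le.trans (l_val (hK w k) hw1 hw2)
              have e2 : ψ k (z k) ≤ f z :=
                (u_val (hK z k) h1.symm h2).trans h1.le
              rw [hw] at e1
              exact e1.trans e2
            · rw [hφU k (z k) hW hL]
              exact sInf_le ⟨z, rfl, h1, h2, rfl⟩
        rw [h1]
        exact (sup_eq_left.mpr (inf_le_left.trans hle)).symm
      · -- degenerate case
        rw [h1, ← h2]
        exact (sup_eq_left.mpr inf_le_right).symm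
  -- (b) monotonicity
  have hmono : ∀ k, Monotone (φ k) := by
    intro k a a' haa'
    by_cases hW : ∃ x : ∀ i, L i, x k = a ∧
        f (Function.update x k ⊥) < f x ∧ f x < f (Function.update x k ⊤)
    · obtain ⟨x, hx, h1, h2⟩ := hW
      rw [hφW k a x hx h1 h2]
      set x' := Function.update x k a' with hx'
      have hxk' : x' k = a' := by simp [hx']
      have hb' : Function.update x' k (⊥ : L k) = Function.update x k ⊥ := by
        rw [hx']; exact Function.update_idem ..
      have ht' : Function.update x' k (⊤ : L k) = Function.update x k ⊤ := by
        rw [hx']; exact Function.update_idem ..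
      have hmv : f x ≤ f x' := by
        conv_lhs => rw [← Function.update_eq_self k x, hx]
        exact hf (hupmem x k a a' haa')
      have h1' : f (update x' k ⊥) < f x' := by
        rw [hb']; exact h1.trans_le hmv
      rcases lt_or_eq_of_le (hhigh x' k) with h2' | h2'
      · rw [hφW k a' x' hxk' h1' h2']; exact hmv
      · by_cases hW' : ∃ z : ∀ i, L i, z k = a' ∧
            f (Function.update z k ⊥) < f z ∧ f z < f (Function.update z k ⊤)
        · obtain ⟨z, hz, hz1, hz2⟩ := hW'
          rw [hφWpsi k a' z hz hz1 hz2]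
          have := l_val (hK x' k) h1' h2'
          rw [hxk'] at this
          exact hmv.trans (h2'.le.trans this)
        · rw [hφL k a' hW' ⟨x', hxk', h1', h2'⟩]
          exact hmv.trans (le_sSup ⟨x', hxk', h1', h2', rfl⟩)
    · by_cases hL : ∃ x : ∀ i, L i, x k = a ∧
          f (Function.update x k ⊥) < f x ∧ f x = f (Function.update x k ⊤)
      · rw [hφL k a hW hL]
        apply sSup_le
        rintro m ⟨x, hx, h1, h2, rfl⟩
        set x' := Function.update x k a' with hx'
        have hxk' : x' k = a' := by simp [hx']
        have hb' : Function.update x' k (⊥ : L k) = Function.update x k ⊥ := by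
          rw [hx']; exact Function.update_idem ..
        have ht' : Function.update x' k (⊤ : L k) = Function.update x k ⊤ := by
          rw [hx']; exact Function.update_idem ..
        have hmv : f x ≤ f x' := by
          conv_lhs => rw [← Function.update_eq_self k x, hx]
          exact hf (hupmem x k a a' haa')
        have hup : f x' ≤ f (update x k ⊤) := by rw [← ht']; exact hhigh x' k
        have hfx : f x' = f x := le_antisymm (hup.trans h2.ge) hmv
        have h1' : f (update x' k ⊥) < f x' := by rw [hb', hfx]; exact h1
        have h2' : f x' = f (update x' k ⊤) := by rw [ht', hfx]; exact h2
        by_cases hW' : ∃ z : ∀ i, L i, z k = a' ∧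
            f (Function.update z k ⊥) < f z ∧ f z < f (Function.update z k ⊤)
        · obtain ⟨z, hz, hz1, hz2⟩ := hW'
          rw [hφWpsi k a' z hz hz1 hz2]
          have := l_val (hK x' k) h1' h2'
          rw [hxk'] at this
          exact (hfx.symm.le).trans (h2'.le.trans this)
        · rw [hφL k a' hW' ⟨x', hxk', h1', h2'⟩]
          exact hfx.symm.le.trans (le_sSup ⟨x', hxk', h1', h2', rfl⟩)
      · -- U case for a
        rw [hφU k a hW hL]
        have hU : ∀ z : ∀ i, L i, z k = a →
            f (update z k ⊥) < f (update z k ⊤) → f z = f (update z k ⊥) := by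
          intro z hz hfr
          rcases lt_or_eq_of_le (hlow z k) with hlt | heq
          · rcases lt_or_eq_of_le (hhigh z k) with hlt2 | heq2
            · exact absurd ⟨z, hz, hlt, hlt2⟩ hW
            · exact absurd ⟨z, hz, hlt, heq2⟩ hL
          · exact heq.symm
        by_cases hW' : ∃ z : ∀ i, L i, z k = a' ∧
            f (Function.update z k ⊥) < f z ∧ f z < f (Function.update z k ⊤)
        · obtain ⟨z', hz', g1, g2⟩ := hW'
          rw [hφW k a' z' hz' g1 g2]
          set z := Function.update z' k a with hzdef
          have hzk : z k = a := by simp [hzdef]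
          have hb' : Function.update z k (⊥ : L k) = Function.update z' k ⊥ := by
            rw [hzdef]; exact Function.update_idem ..
          have ht' : Function.update z k (⊤ : L k) = Function.update z' k ⊤ := by
            rw [hzdef]; exact Function.update_idem ..
          have hfr : f (update z k ⊥) < f (update z k ⊤) := by
            rw [hb', ht']; exact g1.trans g2
          have hz0 : f z = f (update z k ⊥) := hU z hzk hfr
          have : sInf {m : M | ∃ x : ∀ i, L i, x k = a ∧
              f (Function.update x k ⊥) = f x ∧ f x < f (Function.update x k ⊤) ∧
              f x = m} ≤ f z :=
            sInf_le ⟨z, hzk, hz0.symm, by rw [hz0, hb', ht']; exact g1.trans g2, rfl⟩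
          refine this.trans ?_
          rw [hz0, hb']
          exact g1.le
        · by_cases hL' : ∃ z : ∀ i, L i, z k = a' ∧
              f (Function.update z k ⊥) < f z ∧ f z = f (Function.update z k ⊤)
          · obtain ⟨z', hz', g1, g2⟩ := hL'
            rw [hφL k a' hW' ⟨z', hz', g1, g2⟩]
            set z := Function.update z' k a with hzdef
            have hzk : z k = a := by simp [hzdef]
            have hb' : Function.update z k (⊥ : L k) = Function.update z' k ⊥ := by
              rw [hzdef]; exact Function.update_idem ..
            have ht' : Function.update z k (⊤ : L k) = Function.update z' k ⊤ := by
              rw [hzdef]; exact Function.update_idem ..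
            have hfr : f (update z k ⊥) < f (update z k ⊤) := by
              rw [hb', ht', ← g2]; exact g1
            have hz0 : f z = f (update z k ⊥) := hU z hzk hfr
            have hmem : sInf {m : M | ∃ x : ∀ i, L i, x k = a ∧
                f (Function.update x k ⊥) = f x ∧ f x < f (Function.update x k ⊤) ∧
                f x = m} ≤ f z :=
              sInf_le ⟨z, hzk, hz0.symm, by rw [hz0]; exact hfr, rfl⟩
            refine hmem.trans ?_
            have : f z ≤ f z' := by rw [hz0, hb']; exact g1.le
            exact this.trans (le_sSup ⟨z', hz', g1, g2, rfl⟩)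
          · rw [hφU k a' hW' hL']
            apply le_sInf
            rintro m ⟨z', hz', g1, g2, rfl⟩
            set z := Function.update z' k a with hzdef
            have hzk : z k = a := by simp [hzdef]
            have hb' : Function.update z k (⊥ : L k) = Function.update z' k ⊥ := by
              rw [hzdef]; exact Function.update_idem ..
            have ht' : Function.update z k (⊤ : L k) = Function.update z' k ⊤ := by
              rw [hzdef]; exact Function.update_idem ..
            have hfr : f (update z k ⊥) < f (update z k ⊤) := by
              rw [hb', ht', g1]; exact g2
            have hz0 : f z = f (update z k ⊥) := hU z hzk hfr
            have : sInf {m : M | ∃ x : ∀ i, L i, x k = a ∧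
                f (Function.update x k ⊥) = f x ∧ f x < f (Function.update x k ⊤) ∧
                f x = m} ≤ f z :=
              sInf_le ⟨z, hzk, hz0.symm, by rw [hz0]; exact hfr, rfl⟩
            refine this.trans ?_
            rw [hz0, hb', g1]
  -- (c) Sugeno integrality of qDNF f
  have hq1 : IsLatticePolynomial (qDNF f) := by
    have := poly_finset_sup (Finset.univ : Finset (Finset (Fin n)))
      (fun I => fun y : Fin n → M =>
        f (fun i => if i ∈ I then ⊤ else ⊥) ⊓ I.inf y)
      (fun I => IsLatticePolynomial.inf (.const _) (poly_finset_inf I))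
    exact this
  have hq2 : ∀ c : M, qDNF f (fun _ => c) = c := by
    intro c
    apply le_antisymm
    · apply Finset.sup_le
      intro I _
      rcases I.eq_empty_or_nonempty with rfl | hI
      · have : f (fun i => if i ∈ (∅ : Finset (Fin n)) then ⊤ else ⊥) = ⊥ := by
          simpa using h0
        rw [this]
        simp
      · rw [Finset.inf_const hI]
        exact inf_le_right
    · have hun : f (fun i => if i ∈ (Finset.univ : Finset (Fin n)) then ⊤ else ⊥) = ⊤ := by
        simpa using h1
      refine le_trans ?_ (Finset.le_sup (Finset.mem_univ (Finset.univ : Finset (Fin n))))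
      rw [hun, top_inf_eq]
      exact Finset.le_inf fun i _ => le_rfl
  refine ⟨φ, ?_, hmono, ⟨hq1, hq2⟩, ?_⟩
  · intro k a
    exact ⟨fun x hx hx1 hx2 => hφW k a x hx hx1 hx2, hφL k a, hφU k a⟩
  · -- (d) factorization
    intro x
    have hind : ∀ S : Finset (Fin n),
        f x = S.powerset.sup (fun I =>
          f (fun i => if i ∈ I then ⊤ else if i ∈ S then ⊥ else x i) ⊓
            I.inf (fun i => φ i (x i))) := by
      intro S
      induction S using Finset.induction_on with
      | empty => simp
      | @insert k S hk ih =>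
        rw [Finset.powerset_insert, Finset.sup_union, Finset.sup_image, ih,
          ← Finset.sup_sup]
        apply Finset.sup_congr rfl
        intro I hI
        have hIk : k ∉ I := fun h => hk (Finset.mem_powerset.mp hI h)
        set m : ∀ i, L i := fun i => if i ∈ I then ⊤ else if i ∈ S then ⊥ else x i
          with hm
        have hmk : m k = x k := by simp [hm, hIk, hk]
        have hm0 : Function.update m k ⊥ =
            (fun i => if i ∈ I then ⊤ else if i ∈ insert k S then ⊥ else x i) := by
          funext i
          by_cases h : i = k
          · subst h; simp [hIk]
          · simp [Function.update_of_ne h, hm, Finset.mem_insert, h]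
        have hm1 : Function.update m k ⊤ =
            (fun i => if i ∈ insert k I then ⊤ else if i ∈ insert k S then ⊥ else x i) := by
          funext i
          by_cases h : i = k
          · subst h; simp
          · simp [Function.update_of_ne h, hm, Finset.mem_insert, h]
        have hs := hstar m k
        rw [hmk, hm0, hm1] at hs
        show f m ⊓ I.inf (fun i => φ i (x i)) = _
        rw [hs, inf_sup_right]
        simp only [Pi.sup_apply, Function.comp_apply, Finset.inf_insert]
        congr 1
        rw [← inf_assoc, inf_comm (φ k (x k)) _, inf_assoc]
    have hu := hind Finset.univ
    rw [Finset.powerset_univ] at hu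
    rw [hu]
    apply Finset.sup_congr rfl
    intro I _
    congr 2
    funext i
    simp
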